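/- In the Artin group A(3,3,3) = ⟨s, t, r | sts = tst, trt = rtr, srs = rsr⟩, for every k ≥ 1 and all nonzero integers n_1, …, n_k, the element strstr commutes with the element (t^{n_1} s t r)(t^{n_2} s t r) ⋯ (t^{n_k} s t r). In particular, for each such product w, the subgroup ⟨strstr, w⟩ of A(3,3,3) is abelian. -/

import Mathlib

/-
`strstr = (str)²` commutes with `str`, and the three braid relations move `t` through it:
`strstr·t = st·rs·rtr = st·srs·tr = tst·rstr = t·strstr`. Hence `strstr` commutes with
every factor `tⁿ·str`, and so with their product.
-/

namespace A333

/-- The defining relations of the Artin group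
`A(3,3,3) = ⟨s, t, r | sts = tst, trt = rtr, srs = rsr⟩`,
with `0, 1, 2` playing the roles of `s, t, r`. -/
def rels : Set (FreeGroup (Fin 3)) :=
  { FreeGroup.of 0 * FreeGroup.of 1 * FreeGroup.of 0 *
      (FreeGroup.of 1 * FreeGroup.of 0 * FreeGroup.of 1)⁻¹,
    FreeGroup.of 1 * FreeGroup.of 2 * FreeGroup.of 1 *
      (FreeGroup.of 2 * FreeGroup.of 1 * FreeGroup.of 2)⁻¹,
    FreeGroup.of 0 * FreeGroup.of 2 * FreeGroup.of 0 *
      (FreeGroup.of 2 * FreeGroup.of 0 * FreeGroup.of 2)⁻¹ }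

/-- The Artin group `A(3,3,3)`. -/
abbrev Grp := PresentedGroup rels

def s : Grp := PresentedGroup.of 0
def t : Grp := PresentedGroup.of 1
def r : Grp := PresentedGroup.of 2

lemma braid_of_mem {α : Type*} {R : Set (FreeGroup α)} {a b : α}
    (h : .of a * .of b * .of a * (.of b * .of a * .of b)⁻¹ ∈ R) :
    (PresentedGroup.of a : PresentedGroup R) * .of b * .of a = .of b * .of a * .of b := by
  have h := PresentedGroup.mk_eq_mk_of_mul_inv_mem h
  simp only [map_mul] at h
  exact h

lemma s_t_s : s * t * s = t * s * t := braid_of_mem (Or.inl rfl)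

lemma t_r_t : t * r * t = r * t * r := braid_of_mem (Or.inr (Or.inl rfl))

lemma s_r_s : s * r * s = r * s * r := braid_of_mem (Or.inr (Or.inr rfl))

lemma commute_strstr_t : Commute (s * t * r * s * t * r) t :=
  calc s * t * r * s * t * r * t
      = s * t * r * s * (t * r * t) := by group
    _ = s * t * (r * s * r) * t * r := by rw [t_r_t]; group
    _ = (s * t * s) * r * s * t * r := by rw [← s_r_s]; group
    _ = t * (s * t * r * s * t * r) := by rw [s_t_s]; group

lemma commute_strstr_str : Commute (s * t * r * s * t * r) (s * t * r) := by
  simpa only [sq, mul_assoc] using (Commute.refl (s * t * r)).pow_left 2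

lemma commute_strstr_zpow_t_mul_str (m : ℤ) :
    Commute (s * t * r * s * t * r) (t ^ m * s * t * r) := by
  simpa only [mul_assoc] using (commute_strstr_t.zpow_right m).mul_right commute_strstr_str

end A333

open A333 in
/-- In `A(3,3,3)`, the element `strstr` commutes with every product
`(t^{n₁}str)(t^{n₂}str)⋯(t^{n_k}str)` with all `nᵢ` nonzero; in particular the
subgroup generated by `strstr` and such a product is abelian. -/
theorem A333_strstr_commutes (k : ℕ) (n : Fin k → ℤ) :
    Commute (s * t * r * s * t * r)
      (((List.finRange k).map fun p => t ^ n p * s * t * r).prod) ∧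
    IsMulCommutative (Subgroup.closure {s * t * r * s * t * r,
      ((List.finRange k).map fun p => t ^ n p * s * t * r).prod}) := by
  have hcomm : Commute (s * t * r * s * t * r)
      (((List.finRange k).map fun p => t ^ n p * s * t * r).prod) :=
    Commute.list_prod_right _ _ <| List.forall_mem_map.mpr fun p _ ↦
      commute_strstr_zpow_t_mul_str (n p)
  refine ⟨hcomm, Subgroup.isMulCommutative_closure ?_⟩
  rintro x (rfl | rfl) y (rfl | rfl)
  exacts [rfl, hcomm, hcomm.symm, rfl]
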